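/- Let $G^0, G^1, G^2, G^3$ be complex $4\times 4$ matrices satisfying the anti-commutation relations $G^\alpha G^\beta + G^\beta G^\alpha = -2\eta^{\alpha\beta} I$ where $\eta = \mathrm{diag}(-1,1,1,1)$. Let $R_{ijkl}$ be real coefficients with spatial indices $i,j,k,l \in \{1,2,3\}$ satisfying the symmetries of a Riemann curvature tensor (antisymmetry in the first and in the last pair of indices, symmetry under pair exchange, first Bianchi identity). Then $\sum_{i,j} R_{ijkl} G^l G^k \cdot R_{ij}{}^{mn} G_m G_n = 2 \sum_{i,j,k,l} R_{ijkl} R^{ijkl} \cdot I$. -/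
import Mathlib

open Matrix

lemma cliff_key (e : Fin 3 → Matrix (Fin 4) (Fin 4) ℂ)
    (hsq : ∀ a, e a * e a = -1)
    (hac : ∀ a b : Fin 3, a ≠ b → e a * e b = -(e b * e a))
    (c : Fin 3 → Fin 3 → ℂ) (hc : ∀ k l, c l k = -c k l) :
    ∑ k, ∑ l, ∑ m, ∑ n, (c k l * c m n) • (e l * e k * (e m * e n))
      = (2 * ∑ k, ∑ l, (c k l)^2) • (1 : Matrix (Fin 4) (Fin 4) ℂ) := by
  have hz : ∀ k, c k k = 0 := fun k => by have h := hc k k; linear_combination h / 2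
  have h10 : e 1 * e 0 = -(e 0 * e 1) := hac 1 0 (by decide)
  have h20 : e 2 * e 0 = -(e 0 * e 2) := hac 2 0 (by decide)
  have h21 : e 2 * e 1 = -(e 1 * e 2) := hac 2 1 (by decide)
  have s10 : ∀ x, e 1 * (e 0 * x) = -(e 0 * (e 1 * x)) := fun x => by
    rw [← mul_assoc, h10, neg_mul, mul_assoc]
  have s20 : ∀ x, e 2 * (e 0 * x) = -(e 0 * (e 2 * x)) := fun x => by
    rw [← mul_assoc, h20, neg_mul, mul_assoc]
  have s21 : ∀ x, e 2 * (e 1 * x) = -(e 1 * (e 2 * x)) := fun x => by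
    rw [← mul_assoc, h21, neg_mul, mul_assoc]
  have saa : ∀ a x, e a * (e a * x) = -x := fun a x => by
    rw [← mul_assoc, hsq, neg_mul, one_mul]
  have c10 : c 1 0 = -c 0 1 := hc 0 1
  have c20 : c 2 0 = -c 0 2 := hc 0 2
  have c21 : c 2 1 = -c 1 2 := hc 1 2
  simp only [Fin.sum_univ_three, hz, c10, c20, c21, zero_mul, mul_zero, zero_smul,
    add_zero, zero_add]
  simp only [mul_assoc, s10, s20, s21, saa, h10, h20, h21, hsq, mul_neg, neg_mul,
    neg_neg, smul_neg, mul_one, one_mul]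
  match_scalars <;> ring

/-- Clifford-algebra identity for the purely spatial curvature terms. -/
theorem stmt0 (G : Fin 4 → Matrix (Fin 4) (Fin 4) ℂ)
    (hG : ∀ α β, G α * G β + G β * G α =
      (-2 * (if α = β then (if α = 0 then (-1 : ℂ) else 1) else 0)) • (1 : Matrix (Fin 4) (Fin 4) ℂ))
    (R : Fin 3 → Fin 3 → Fin 3 → Fin 3 → ℝ)
    (hanti1 : ∀ i j k l, R j i k l = - R i j k l)
    (hanti2 : ∀ i j k l, R i j l k = - R i j k l)
    (hpair : ∀ i j k l, R k l i j = R i j k l)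
    (hbianchi : ∀ i j k l, R i j k l + R j k i l + R k i j l = 0) :
    ∑ i, ∑ j, ∑ k, ∑ l, ∑ m, ∑ n,
        ((R i j k l * R i j m n : ℝ) : ℂ) • (G l.succ * G k.succ * (G m.succ * G n.succ))
      = ((2 * ∑ i, ∑ j, ∑ k, ∑ l, (R i j k l) ^ 2 : ℝ) : ℂ) • (1 : Matrix (Fin 4) (Fin 4) ℂ) := by
  have hsq : ∀ a : Fin 3, G a.succ * G a.succ = -1 := by
    intro a
    have h := hG a.succ a.succ
    rw [if_pos rfl, if_neg (Fin.succ_ne_zero a)] at h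
    have h2 : (2:ℂ) • (G a.succ * G a.succ) = (-2 : ℂ) • (1 : Matrix (Fin 4) (Fin 4) ℂ) := by
      rw [two_smul]; simpa using h
    have h3 := congrArg (fun M => (2⁻¹ : ℂ) • M) h2
    simpa [smul_smul] using h3
  have hac : ∀ a b : Fin 3, a ≠ b → G a.succ * G b.succ = -(G b.succ * G a.succ) := by
    intro a b hab
    have h := hG a.succ b.succ
    rw [if_neg (by simpa [Fin.succ_inj] using hab)] at h
    simp only [mul_zero, zero_smul] at h
    exact eq_neg_of_add_eq_zero_left h
  have key : ∀ i j : Fin 3,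
      ∑ k, ∑ l, ∑ m, ∑ n, (((R i j k l : ℝ) : ℂ) * ((R i j m n : ℝ) : ℂ)) •
          (G l.succ * G k.succ * (G m.succ * G n.succ))
        = (2 * ∑ k, ∑ l, (((R i j k l : ℝ) : ℂ))^2) • (1 : Matrix (Fin 4) (Fin 4) ℂ) := by
    intro i j
    exact cliff_key (fun a => G a.succ) hsq hac (fun k l => ((R i j k l : ℝ) : ℂ))
      (fun k l => by show ((R i j l k : ℝ) : ℂ) = -((R i j k l : ℝ) : ℂ); exact_mod_cast hanti2 i j k l)
  push_cast
  calc ∑ i, ∑ j, ∑ k, ∑ l, ∑ m, ∑ n,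
        (((R i j k l : ℝ) : ℂ) * ((R i j m n : ℝ) : ℂ)) •
          (G l.succ * G k.succ * (G m.succ * G n.succ))
      = ∑ i, ∑ j, (2 * ∑ k, ∑ l, (((R i j k l : ℝ) : ℂ))^2) • (1 : Matrix (Fin 4) (Fin 4) ℂ) := by
        exact Finset.sum_congr rfl fun i _ => Finset.sum_congr rfl fun j _ => key i j
    _ = (2 * ∑ i, ∑ j, ∑ k, ∑ l, (((R i j k l : ℝ) : ℂ))^2) • (1 : Matrix (Fin 4) (Fin 4) ℂ) := by
        simp only [← Finset.sum_smul, Finset.mul_sum]
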